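/- Fix t ≥ 1. Define, for a binary string δ = η₁ 1 η₂ 1 ⋯ 1 η_c (zero-runs separated by ones), the quantities α_c = number of non-overlapping 11 substrings plus remaining ones strictly before the final block 1η_c (with α_c = 0 if c = 1), and γ_c = length of the final zero-run η_c (possibly 0). Then the maximum length of a binary string δ such that for every prefix of δ ending at a run boundary (i.e., every string of the form η₁ 1 ⋯ 1 η_j for j = 1, …, c), the corresponding quantities satisfy α + γ ≤ t − 1, equals t(t+3)/2 − 1. -/

import Mathlib

/-- Greedy count of non-overlapping `11` substrings plus remaining single ones. -/
def onesCount : List Bool → ℕ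
  | [] => 0
  | false :: l => onesCount l
  | [true] => 1
  | true :: _ :: l => 1 + onesCount l

/-- Every prefix of `L` ending at a run boundary (the next character, if any, is a one)
satisfies `α + γ ≤ t - 1`, where `γ` is the length of the trailing zero-run of the
prefix and `α` counts non-overlapping `11` substrings plus remaining ones strictly
before the final block `1 0^γ` (with `α = 0` for an all-zero prefix). -/
def FlagNoStop (t : ℕ) (L : List Bool) : Prop :=
  ∀ P Q : List Bool, L = P ++ Q → (Q = [] ∨ Q.head? = some true) →
    (∀ A γ, P = A ++ [true] ++ List.replicate γ false → onesCount A + γ ≤ t - 1) ∧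
    (∀ γ, P = List.replicate γ false → γ ≤ t - 1)

/-!
Cutting a string at its last one writes it as `A 1 0^γ`, and the stopping test at that
boundary reads `onesCount A + γ ≤ t - 1`; so the admissible strings are exactly those grown
from `0^γ` (`γ ≤ t - 1`) by appending such blocks. With `k = onesCount L` and
`b = onesCount (L 1)`, the invariant `|L| + 1 ≤ t + (t - 1) + ⋯ + (t - b + 1) + k` survives
each block: a nonempty block raises `b` by one and costs at most `t - k` letters, while an
empty block only completes a pair `11`. As `k ≤ t` this bounds `|L|` by
`t(t+1)/2 + t - 1`, which the string with runs `t-1, t-1, t-2, …, 1, 0` attains.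
-/

open List

@[elab_as_elim]
theorem induction_on_runs {motive : List Bool → Prop}
    (zeros : ∀ γ, motive (replicate γ false))
    (snoc : ∀ A γ, motive A → motive (A ++ true :: replicate γ false)) (L : List Bool) :
    motive L := by
  suffices ∀ n, motive (L ++ replicate n false) by simpa using this 0
  induction L using reverseRecOn with
  | nil => simpa using zeros
  | append_singleton L b ih =>
    intro n
    cases b
    · simpa [replicate_succ] using ih (n + 1)
    · simpa using snoc L n (by simpa using ih 0)

theorem append_true_replicate_false_inj {A B : List Bool} {a b : ℕ}
    (h : A ++ true :: replicate a false = B ++ true :: replicate b false) : A = B ∧ a = b := by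
  rcases append_eq_append_iff.mp h with ⟨_ | ⟨x, c⟩, rfl, hc⟩ | ⟨_ | ⟨x, c⟩, rfl, hc⟩
  · simp_all
  · simpa using congrArg (true ∈ ·) (cons.inj hc).2
  · simp_all [eq_comm]
  · simpa using congrArg (true ∈ ·) (cons.inj hc).2

theorem onesCount_replicate_false_append (n : ℕ) (Y : List Bool) :
    onesCount (replicate n false ++ Y) = onesCount Y := by
  induction n with
  | zero => rfl
  | succ n ih => simpa [replicate_succ, onesCount] using ih

theorem onesCount_append_false_cons (X Y : List Bool) :
    onesCount (X ++ false :: Y) = onesCount X + onesCount Y := by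
  induction X using onesCount.induct with
  | case4 _ l ih => simp only [cons_append, onesCount, ih]; omega
  | _ => simp_all [onesCount]

theorem onesCount_replicate_false (n : ℕ) : onesCount (replicate n false) = 0 := by
  simpa [onesCount] using onesCount_replicate_false_append n []

theorem onesCount_append_replicate_false (X : List Bool) (n : ℕ) :
    onesCount (X ++ replicate n false) = onesCount X := by
  cases n with
  | zero => simp
  | succ n => rw [replicate_succ, onesCount_append_false_cons, onesCount_replicate_false, add_zero]

theorem onesCount_append_true_true (X : List Bool) :
    onesCount (X ++ [true, true]) = onesCount X + 1 := by
  induction X using onesCount.induct with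
  | case4 _ l ih => simp only [cons_append, onesCount, ih]; omega
  | _ => simp_all [onesCount]

theorem onesCount_le_append_true (X : List Bool) : onesCount X ≤ onesCount (X ++ [true]) := by
  induction X using onesCount.induct with
  | case4 _ l ih => simpa only [onesCount, cons_append, add_le_add_iff_left] using ih
  | _ => simp_all [onesCount]

theorem onesCount_append_true_le (X : List Bool) : onesCount (X ++ [true]) ≤ onesCount X + 1 := by
  induction X using onesCount.induct with
  | case4 _ l ih => simp only [cons_append, onesCount]; omega
  | _ => simp_all [onesCount]

def NoStopAt (t : ℕ) (P : List Bool) : Prop :=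
  (∀ A γ, P = A ++ [true] ++ replicate γ false → onesCount A + γ ≤ t - 1) ∧
    (∀ γ, P = replicate γ false → γ ≤ t - 1)

section NoStopAt

variable {t : ℕ}

theorem noStopAt_replicate_false_iff {γ : ℕ} : NoStopAt t (replicate γ false) ↔ γ ≤ t - 1 := by
  refine ⟨fun h ↦ h.2 γ rfl, fun hγ ↦ ⟨fun A γ' h ↦ ?_, fun γ' h ↦ ?_⟩⟩
  · simpa using congrArg (true ∈ ·) h
  · simp_all

theorem noStopAt_append_true_replicate_false_iff {A : List Bool} {γ : ℕ} :
    NoStopAt t (A ++ true :: replicate γ false) ↔ onesCount A + γ ≤ t - 1 := by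
  refine ⟨fun h ↦ h.1 A γ (by simp), fun hγ ↦ ⟨fun A' γ' h ↦ ?_, fun γ' h ↦ ?_⟩⟩
  · obtain ⟨rfl, rfl⟩ := append_true_replicate_false_inj (by simpa using h.symm)
    exact hγ
  · simpa using congrArg (true ∈ ·) h

end NoStopAt

def descSum (t b : ℕ) : ℕ := ∑ i ∈ Finset.range b, (t - i)

theorem descSum_succ (t b : ℕ) : descSum t (b + 1) = descSum t b + (t - b) :=
  Finset.sum_range_succ _ _

theorem descSum_le_descSum_self (t b : ℕ) : descSum t b ≤ descSum t t := by
  rcases le_total b t with h | h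
  · exact Finset.sum_le_sum_of_subset (Finset.range_subset_range.2 h)
  · refine (Finset.sum_subset (Finset.range_subset_range.2 h) fun i _ hi ↦ ?_).ge
    simp only [Finset.mem_range, not_lt] at hi
    omega

theorem two_mul_descSum_self (t : ℕ) : 2 * descSum t t = t * (t + 1) := by
  have : descSum t t = ∑ i ∈ Finset.range (t + 1), i := by
    rw [descSum, ← Finset.sum_range_reflect, Finset.sum_range_succ']
    exact Finset.sum_congr rfl fun i hi ↦ by simp only [Finset.mem_range] at hi; omega
  rw [this, mul_comm, Finset.sum_range_id_mul_two]
  simp [mul_comm]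

section FlagNoStop

variable {t : ℕ}

theorem flagNoStop_replicate_false_iff {γ : ℕ} : FlagNoStop t (replicate γ false) ↔ γ ≤ t - 1 := by
  refine ⟨fun h ↦ noStopAt_replicate_false_iff.mp (h _ [] (by simp) (.inl rfl)), fun hγ ↦ ?_⟩
  intro P Q hPQ _
  obtain ⟨hlen, hP, -⟩ := replicate_eq_append_iff.mp hPQ
  rw [hP]
  exact noStopAt_replicate_false_iff.mpr (by omega)

theorem flagNoStop_append_true_replicate_false_iff {A : List Bool} {γ : ℕ} :
    FlagNoStop t (A ++ true :: replicate γ false) ↔ FlagNoStop t A ∧ onesCount A + γ ≤ t - 1 := by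
  constructor
  · intro h
    refine ⟨fun P Q hAPQ hQ ↦ h P (Q ++ true :: replicate γ false) (by simp [hAPQ]) ?_,
      noStopAt_append_true_replicate_false_iff.mp (h _ [] (by simp) (.inl rfl))⟩
    cases Q <;> simp_all
  · rintro ⟨hA, hγ⟩ P Q hPQ hQ
    rcases append_eq_append_iff.mp hPQ with ⟨_ | ⟨x, c⟩, rfl, hc⟩ | ⟨c, rfl, rfl⟩
    · simpa using hA A [] (by simp) (.inl rfl)
    · simp only [cons_append, cons.injEq] at hc
      obtain ⟨rfl, hc⟩ := hc
      cases Q with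
      | nil => exact (append_nil c ▸ hc) ▸ noStopAt_append_true_replicate_false_iff.mpr hγ
      | cons q Q => simpa [show q = true by simpa using hQ] using congrArg (true ∈ ·) hc
    · exact hA P c rfl (by cases c <;> simp_all)

theorem onesCount_le_of_flagNoStop (ht : 1 ≤ t) {L : List Bool} (h : FlagNoStop t L) :
    onesCount L ≤ t := by
  induction L using induction_on_runs with
  | zeros γ => simp [onesCount_replicate_false]
  | snoc A γ _ =>
    have hγ := (flagNoStop_append_true_replicate_false_iff.mp h).2
    have := onesCount_append_true_le A
    have := onesCount_append_replicate_false (A ++ [true]) γ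
    simp only [append_assoc, cons_append, nil_append] at this
    omega

theorem length_add_one_le_of_flagNoStop (ht : 1 ≤ t) {L : List Bool} (h : FlagNoStop t L) :
    L.length + 1 ≤ descSum t (onesCount (L ++ [true])) + onesCount L := by
  induction L using induction_on_runs with
  | zeros γ =>
    have hγ := flagNoStop_replicate_false_iff.mp h
    rw [onesCount_replicate_false_append, onesCount_replicate_false, length_replicate]
    simp only [descSum, Finset.sum_range_one, onesCount]
    omega
  | snoc A γ ih =>
    obtain ⟨hA, hγ⟩ := flagNoStop_append_true_replicate_false_iff.mp h
    have ih := ih hA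
    have hb₁ := onesCount_le_append_true A
    have hb₂ := onesCount_append_true_le A
    have hk : onesCount (A ++ true :: replicate γ false) = onesCount (A ++ [true]) := by
      simpa using onesCount_append_replicate_false (A ++ [true]) γ
    rw [hk]
    simp only [length_append, length_cons, length_replicate]
    cases γ with
    | zero =>
      have hb : onesCount (A ++ true :: replicate 0 false ++ [true]) = onesCount A + 1 := by
        simpa using onesCount_append_true_true A
      have := descSum_succ t (onesCount A)
      rw [hb]
      rcases (by omega : onesCount (A ++ [true]) = onesCount A ∨
        onesCount (A ++ [true]) = onesCount A + 1) with hb' | hb' <;> rw [hb'] at ih ⊢ <;> omega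
    | succ g =>
      have hb : onesCount (A ++ true :: replicate (g + 1) false ++ [true])
          = onesCount (A ++ [true]) + 1 := by
        rw [show A ++ true :: replicate (g + 1) false ++ [true]
            = A ++ [true] ++ false :: (replicate g false ++ [true]) by simp [replicate_succ],
          onesCount_append_false_cons, onesCount_replicate_false_append]
        rfl
      have := descSum_succ t (onesCount (A ++ [true]))
      rw [hb]
      omega

end FlagNoStop

/-- The extremal string `0^{t-1} 1 0^{t-1} 1 0^{t-2} ⋯`, cut after `k` blocks: the block
appended when `α = k` is as long as the stopping test allows. -/
def extremalString (t : ℕ) : ℕ → List Bool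
  | 0 => replicate (t - 1) false
  | k + 1 => extremalString t k ++ true :: replicate (t - 1 - k) false

section extremalString

variable {t k : ℕ}

theorem onesCount_extremalString_append (hk : k ≤ t - 1) (Z : List Bool) :
    onesCount (extremalString t k ++ Z) = k + onesCount Z := by
  induction k generalizing Z with
  | zero => simp [extremalString, onesCount_replicate_false_append]
  | succ k ih =>
    obtain ⟨n, hn⟩ : ∃ n, t - 1 - k = n + 1 := ⟨t - 2 - k, by omega⟩
    rw [extremalString, hn, show extremalString t k ++ true :: replicate (n + 1) false ++ Z
        = extremalString t k ++ [true] ++ false :: (replicate n false ++ Z) by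
        simp [replicate_succ], onesCount_append_false_cons, onesCount_replicate_false_append,
      ih (by omega) [true]]
    rfl

theorem flagNoStop_extremalString (hk : k ≤ t) : FlagNoStop t (extremalString t k) := by
  induction k with
  | zero => exact flagNoStop_replicate_false_iff.mpr le_rfl
  | succ k ih =>
    refine flagNoStop_append_true_replicate_false_iff.mpr ⟨ih (by omega), ?_⟩
    have := onesCount_extremalString_append (t := t) (k := k) (by omega) []
    simp only [append_nil, onesCount, add_zero] at this
    omega

theorem length_extremalString (hk : k ≤ t) :
    (extremalString t k).length = t - 1 + descSum t k := by
  induction k with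
  | zero => simp [extremalString, descSum]
  | succ k ih =>
    rw [extremalString, length_append, ih (by omega), descSum_succ]
    simp only [length_cons, length_replicate]
    omega

end extremalString

/-- Flag-FTEC adaptive stopping bound: the maximum length of a binary string for which
the stopping condition `α + γ ≥ t` never holds at any run boundary is `t(t+3)/2 − 1`. -/
theorem max_flag_no_stop (t : ℕ) (ht : 1 ≤ t) :
    IsGreatest {n | ∃ L : List Bool, L.length = n ∧ FlagNoStop t L}
      (t * (t + 3) / 2 - 1) := by
  have hsum := two_mul_descSum_self t
  have hmul : t * (t + 3) = t * (t + 1) + 2 * t := by ring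
  refine ⟨⟨extremalString t t, ?_, flagNoStop_extremalString le_rfl⟩, ?_⟩
  · rw [length_extremalString le_rfl, hmul]
    omega
  · rintro _ ⟨L, rfl, h⟩
    have hlen := length_add_one_le_of_flagNoStop ht h
    have hones := onesCount_le_of_flagNoStop ht h
    have hdesc := descSum_le_descSum_self t (onesCount (L ++ [true]))
    rw [hmul]
    omega
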